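/- arXiv:1105.1305 — 5 statements merged into one kernel-verified Lean document; each statement's English description precedes it below -/
import Mathlib

section
/- Let b₁, b₂ be integers. The natural density of the set of integers n such that both n + b₁ and n + b₂ are squarefree, restricted to a fixed residue class modulo 36 in which both n + b₁ and n + b₂ avoid divisibility by 4 and 9, is (1/36)·∏_{p ≥ 5, p² | b₁ − b₂}(1 − 1/p²) · ∏_{p ≥ 5, p² ∤ b₁ − b₂}(1 − 2/p²). -/
/-!
Sieve only by the primes `5 ≤ p ≤ D`. The sieved condition on `n` is periodic modulo
`36 ∏ p²`, and by the Chinese remainder theorem its density is `(1/36) ∏_{5 ≤ p ≤ D} ρ(p)`,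
where `ρ(p)` is the proportion of residues mod `p²` avoiding both `-b₁` and `-b₂`. Since the
class mod 36 already rules out `4` and `9`, an `n < x` that passes the sieve but fails the
theorem's condition has some `n + bᵢ` divisible by `m²` with `D < m` and `m² < x + bᵢ`; there
are at most `(2x + bᵢ)/D` such `n`. So the sieved densities converge to the true one uniformly
in `x` as `D → ∞`, while the partial Euler products converge because `∑ 1/p²` does.
-/

open Filter Finset Function Topology
open Nat (count primesBelow)

section Counting

variable {P Q : ℕ → Prop} [DecidablePred P] [DecidablePred Q]

theorem count_eq_card_filter_zmod (s : ℕ) [NeZero s] : count P s = #{x : ZMod s | P x.val} := by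
  rw [Nat.count_eq_card_filter_range]
  refine card_nbij' (fun n => (n : ZMod s)) ZMod.val ?_ ?_ ?_ ?_
  · intro n hn
    simp_all [ZMod.val_natCast, Nat.mod_eq_of_lt]
  · intro x hx
    simp_all [ZMod.val_lt]
  · intro n hn
    simp_all [ZMod.val_natCast, Nat.mod_eq_of_lt]
  · intro x _
    simp

theorem Function.Periodic.count_and_mul_of_coprime {s t : ℕ} (hst : s.Coprime t)
    (hP : Periodic P s) (hQ : Periodic Q t) :
    count (fun n => P n ∧ Q n) (s * t) = count P s * count Q t := by
  rcases eq_or_ne s 0 with rfl | hs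
  · simp
  rcases eq_or_ne t 0 with rfl | ht
  · simp
  have : NeZero s := ⟨hs⟩
  have : NeZero t := ⟨ht⟩
  rw [count_eq_card_filter_zmod, count_eq_card_filter_zmod, count_eq_card_filter_zmod,
    ← card_product, ← filter_product, univ_product_univ]
  refine card_equiv (ZMod.chineseRemainder hst).toEquiv fun x => ?_
  have hx : ZMod.chineseRemainder hst x = ((x.val : ZMod s), (x.val : ZMod t)) := by
    conv_lhs => rw [← ZMod.natCast_zmod_val x]
    rw [map_natCast]
    rfl
  simp only [mem_filter, mem_univ, true_and, RingEquiv.toEquiv_eq_coe, EquivLike.coe_coe, hx,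
    ZMod.val_natCast, hP.map_mod_nat, hQ.map_mod_nat]

theorem Function.Periodic.count_mul_add {T : ℕ} (hP : Periodic P T) (k r : ℕ) :
    count P (T * k + r) = k * count P T + count P r := by
  induction k with
  | zero => simp
  | succ k ih =>
    have hP' : ∀ n, P (n + T) = P n := hP
    have hshift : count (fun j => P (T + j)) (T * k + r) = count P (T * k + r) := by
      simp only [Nat.count_eq_card_filter_range, add_comm T, hP']
    rw [show T * (k + 1) + r = T + (T * k + r) by ring, Nat.count_add, hshift, ih]
    ring

theorem Function.Periodic.tendsto_count_div {T : ℕ} (hP : Periodic P T) (hT : 0 < T) :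
    Tendsto (fun x : ℕ => (count P x : ℝ) / x) atTop (𝓝 (count P T / T)) := by
  have bound : ∀ x : ℕ, 0 < x → dist ((count P x : ℝ) / x) (count P T / T) ≤ T / x := by
    intro x hx
    obtain ⟨k, r, hr, rfl⟩ : ∃ k r, r < T ∧ x = T * k + r :=
      ⟨x / T, x % T, Nat.mod_lt _ hT, (Nat.div_add_mod x T).symm⟩
    have hcT : (count P T : ℝ) ≤ T := by exact_mod_cast Nat.count_le P
    have hcr : (count P r : ℝ) ≤ r := by exact_mod_cast Nat.count_le P
    have hrT : (r : ℝ) < T := by exact_mod_cast hr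
    have hx' : (0 : ℝ) < ((T * k + r : ℕ) : ℝ) := by exact_mod_cast hx
    have hT' : (0 : ℝ) < T := by exact_mod_cast hT
    -- with `x = T k + r` the numerator is `T · count P r - r · count P T`
    have hnum : |((k * count P T + count P r : ℕ) : ℝ) * T - ((T * k + r : ℕ) : ℝ) * count P T|
        ≤ T * T := by
      push_cast
      rw [abs_le]
      constructor <;> nlinarith [Nat.cast_nonneg (α := ℝ) (count P r)]
    rw [hP.count_mul_add, Real.dist_eq, div_sub_div _ _ hx'.ne' hT'.ne', abs_div,
      abs_of_pos (mul_pos hx' hT'), div_le_div_iff₀ (mul_pos hx' hT') hx']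
    nlinarith
  refine tendsto_iff_dist_tendsto_zero.2 (squeeze_zero' (Eventually.of_forall fun _ => dist_nonneg)
    ?_ (tendsto_const_div_atTop_nhds_zero_nat (T : ℝ)))
  filter_upwards [eventually_gt_atTop 0] with x hx using bound x hx

end Counting

theorem count_not_dvd_add_and_not_dvd_add {q : ℕ} (hq : 1 < q) (b₁ b₂ : ℕ) :
    (count (fun n => ¬q ∣ n + b₁ ∧ ¬q ∣ n + b₂) q : ℝ) =
      q - if (q : ℤ) ∣ (b₁ : ℤ) - b₂ then 1 else 2 := by
  have : NeZero q := ⟨by omega⟩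
  have hroot : ∀ (x : ZMod q) (b : ℕ), q ∣ x.val + b ↔ x = -b := fun x b => by
    rw [← ZMod.natCast_eq_zero_iff, Nat.cast_add, ZMod.natCast_zmod_val, add_eq_zero_iff_eq_neg]
  have hpair : (-b₁ : ZMod q) = -b₂ ↔ (q : ℤ) ∣ (b₁ : ℤ) - b₂ := by
    rw [← ZMod.intCast_zmod_eq_zero_iff_dvd, neg_inj, Int.cast_sub, sub_eq_zero]
    simp
  have hfilter : ({x : ZMod q | ¬x = -b₁ ∧ ¬x = -b₂} : Finset (ZMod q)) =
      {-(b₁ : ZMod q), -(b₂ : ZMod q)}ᶜ := by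
    ext x
    simp
  rw [count_eq_card_filter_zmod]
  simp only [hroot, hfilter, card_compl, ZMod.card]
  rw [Nat.cast_sub (card_le_univ _ |>.trans_eq (ZMod.card q))]
  split_ifs with h
  · rw [hpair.2 h, pair_eq_singleton, card_singleton, Nat.cast_one]
  · rw [card_pair (mt hpair.1 h), Nat.cast_ofNat]

/-- The proportion of residues `n` mod `p²` with `p² ∤ n + b₁` and `p² ∤ n + b₂`
(see `count_not_sq_dvd_add`). -/
noncomputable def localDensity (b₁ b₂ p : ℕ) : ℝ :=
  if (p : ℤ) ^ 2 ∣ (b₁ : ℤ) - b₂ then 1 - 1 / (p : ℝ) ^ 2 else 1 - 2 / (p : ℝ) ^ 2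

theorem count_not_sq_dvd_add (b₁ b₂ : ℕ) {p : ℕ} (hp : 2 ≤ p) :
    (count (fun n => ¬p ^ 2 ∣ n + b₁ ∧ ¬p ^ 2 ∣ n + b₂) (p ^ 2) : ℝ) =
      (p : ℝ) ^ 2 * localDensity b₁ b₂ p := by
  have hp' : (p : ℝ) ≠ 0 := by positivity
  rw [count_not_dvd_add_and_not_dvd_add (by nlinarith), localDensity]
  push_cast
  split_ifs <;> field_simp

def Sieved (m a b₁ b₂ : ℕ) (F : Finset ℕ) (n : ℕ) : Prop :=
  n % m = a ∧ ∀ p ∈ F, ¬p ^ 2 ∣ n + b₁ ∧ ¬p ^ 2 ∣ n + b₂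

instance (m a b₁ b₂ : ℕ) (F : Finset ℕ) : DecidablePred (Sieved m a b₁ b₂ F) :=
  fun _ => inferInstanceAs (Decidable (_ ∧ _))

theorem periodic_sieved (m a b₁ b₂ : ℕ) (F : Finset ℕ) :
    Periodic (Sieved m a b₁ b₂ F) (m * ∏ p ∈ F, p ^ 2) := by
  intro n
  have hdvd : ∀ p ∈ F, ∀ b, p ^ 2 ∣ n + m * ∏ q ∈ F, q ^ 2 + b ↔ p ^ 2 ∣ n + b := fun p hp b => by
    rw [add_right_comm]
    exact Nat.dvd_add_left (dvd_mul_of_dvd_right (dvd_prod_of_mem _ hp) m)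
  simp only [Sieved, Nat.add_mul_mod_self_left]
  exact propext (and_congr_right fun _ => forall₂_congr fun p hp => by rw [hdvd p hp, hdvd p hp])

theorem count_sieved {m a : ℕ} (ha : a < m) (b₁ b₂ : ℕ) {F : Finset ℕ}
    (hF : ∀ p ∈ F, p.Prime ∧ p.Coprime m) :
    (count (Sieved m a b₁ b₂ F) (m * ∏ p ∈ F, p ^ 2) : ℝ) =
      ∏ p ∈ F, (p : ℝ) ^ 2 * localDensity b₁ b₂ p := by
  induction F using Finset.induction_on with
  | empty =>
    have : ({n ∈ range m | Sieved m a b₁ b₂ ∅ n} : Finset ℕ) = {a} := by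
      ext n
      simp only [Sieved, mem_filter, mem_range, mem_singleton, notMem_empty, false_implies,
        implies_true, and_true]
      refine ⟨fun ⟨hn, h⟩ => by rwa [Nat.mod_eq_of_lt hn] at h, ?_⟩
      rintro rfl
      exact ⟨ha, Nat.mod_eq_of_lt ha⟩
    simp [Nat.count_eq_card_filter_range, this]
  | insert p F hpF ih =>
    obtain ⟨hp, hpm⟩ := hF p (mem_insert_self p F)
    have hcop : (p ^ 2).Coprime (m * ∏ q ∈ F, q ^ 2) := by
      refine Nat.Coprime.pow_left 2 (hpm.mul_right (Nat.Coprime.prod_right fun q hq => ?_))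
      have hq' := (hF q (mem_insert_of_mem hq)).1
      exact ((Nat.coprime_primes hp hq').2 (ne_of_mem_of_not_mem hq hpF).symm).pow_right 2
    have hlocal : Periodic (fun n => ¬p ^ 2 ∣ n + b₁ ∧ ¬p ^ 2 ∣ n + b₂) (p ^ 2) := fun n => by
      simp only [add_right_comm n (p ^ 2), Nat.dvd_add_self_right]
    have hsplit : ∀ N, count (Sieved m a b₁ b₂ (insert p F)) N =
        count (fun n => (¬p ^ 2 ∣ n + b₁ ∧ ¬p ^ 2 ∣ n + b₂) ∧ Sieved m a b₁ b₂ F n) N := by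
      intro N
      simp only [Nat.count_eq_card_filter_range]
      refine congrArg card (filter_congr fun n _ => ?_)
      simp only [Sieved, forall_mem_insert]
      tauto
    rw [prod_insert hpF, prod_insert hpF, mul_left_comm, hsplit,
      hlocal.count_and_mul_of_coprime hcop (periodic_sieved m a b₁ b₂ F), Nat.cast_mul,
      count_not_sq_dvd_add b₁ b₂ hp.two_le, ih fun q hq => hF q (mem_insert_of_mem hq)]

theorem tendsto_count_sieved_div {m a : ℕ} (ha : a < m) (b₁ b₂ : ℕ) {F : Finset ℕ}
    (hF : ∀ p ∈ F, p.Prime ∧ p.Coprime m) :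
    Tendsto (fun x : ℕ => (count (Sieved m a b₁ b₂ F) x : ℝ) / x) atTop
      (𝓝 ((1 / m) * ∏ p ∈ F, localDensity b₁ b₂ p)) := by
  have hpos : 0 < m * ∏ p ∈ F, p ^ 2 :=
    Nat.mul_pos (by omega) (prod_pos fun p hp => pow_pos (hF p hp).1.pos 2)
  convert (periodic_sieved m a b₁ b₂ F).tendsto_count_div hpos using 2
  have hm : (m : ℝ) ≠ 0 := by exact_mod_cast (by omega : m ≠ 0)
  have hF' : ∏ p ∈ F, (p : ℝ) ^ 2 ≠ 0 :=
    prod_ne_zero_iff.2 fun p hp => pow_ne_zero 2 (Nat.cast_ne_zero.2 (hF p hp).1.ne_zero)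
  rw [count_sieved ha b₁ b₂ hF, prod_mul_distrib]
  push_cast
  field_simp

theorem HasProd.tendsto_prod_primesBelow {M : Type*} [CommMonoid M] [TopologicalSpace M]
    {f : ℕ → M} {a : M} (h : HasProd (fun p : Nat.Primes => f p) a) :
    Tendsto (fun n => ∏ p ∈ primesBelow n, f p) atTop (𝓝 a) := by
  simpa only [primesBelow, prod_filter] using
    ((Nat.Primes.hasProd_iff_hasProd_ite f).1 h).tendsto_prod_nat

theorem multipliable_localDensity (b₁ b₂ : ℕ) :
    Multipliable fun p : Nat.Primes => if 5 ≤ (p : ℕ) then localDensity b₁ b₂ p else 1 := by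
  have hsum : Summable fun p : Nat.Primes => 2 / ((p : ℕ) : ℝ) ^ 2 := by
    have h : Summable fun p : Nat.Primes => 1 / ((p : ℕ) : ℝ) ^ 2 :=
      (Real.summable_one_div_nat_pow.2 one_lt_two).comp_injective Subtype.val_injective
    simpa only [mul_one_div] using h.mul_left 2
  have hbound : ∀ p : Nat.Primes,
      ‖(if 5 ≤ (p : ℕ) then localDensity b₁ b₂ p else 1) - 1‖ ≤ 2 / ((p : ℕ) : ℝ) ^ 2 := by
    intro p
    unfold localDensity
    split_ifs
    · rw [sub_sub_cancel_left, norm_neg, Real.norm_of_nonneg (by positivity)]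
      gcongr
      norm_num
    · rw [sub_sub_cancel_left, norm_neg, Real.norm_of_nonneg (by positivity)]
    · rw [sub_self, norm_zero]
      positivity
  simpa using Real.multipliable_one_add_of_summable (hsum.of_norm_bounded hbound)

def sievingPrimes (D : ℕ) : Finset ℕ := {p ∈ primesBelow (D + 1) | 5 ≤ p}

theorem tendsto_prod_sievingPrimes (b₁ b₂ : ℕ) :
    Tendsto (fun D => ∏ p ∈ sievingPrimes D, localDensity b₁ b₂ p) atTop
      (𝓝 (∏' p : Nat.Primes, if 5 ≤ (p : ℕ) then localDensity b₁ b₂ p else 1)) := by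
  refine ((multipliable_localDensity b₁ b₂).hasProd.tendsto_prod_primesBelow
    (f := fun n => if 5 ≤ n then localDensity b₁ b₂ n else 1)).comp (tendsto_add_atTop_nat 1)
    |>.congr fun D => ?_
  simp only [comp_apply, sievingPrimes, prod_filter]

theorem prime_and_coprime_of_mem_sievingPrimes {D p : ℕ} (hp : p ∈ sievingPrimes D) :
    p.Prime ∧ p.Coprime 36 := by
  simp only [sievingPrimes, mem_filter, Nat.mem_primesBelow] at hp
  obtain ⟨⟨-, hp⟩, h5⟩ := hp
  refine ⟨hp, (Nat.Prime.coprime_iff_not_dvd hp).2 fun h => ?_⟩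
  rcases (Nat.Prime.dvd_mul hp).1 (show p ∣ 2 ^ 2 * 3 ^ 2 from h) with h | h
  · exact absurd (Nat.le_of_dvd two_pos (hp.dvd_of_dvd_pow h)) (by omega)
  · exact absurd (Nat.le_of_dvd three_pos (hp.dvd_of_dvd_pow h)) (by omega)

theorem card_filter_dvd_add_le (x b q : ℕ) :
    (#{n ∈ range x | q ∣ n + b} : ℝ) ≤ x / q + 1 := by
  have hcard : #{n ∈ range x | q ∣ n + b} ≤ #(range (x / q + 1)) := by
    refine card_le_card_of_injOn (· / q) (fun n hn => ?_) fun n₁ h₁ n₂ h₂ h => ?_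
    · simp only [coe_filter, mem_range, Set.mem_ofPred_eq, coe_range, Set.mem_Iio] at hn ⊢
      exact Nat.lt_succ_of_le (Nat.div_le_div_right hn.1.le)
    · simp only [coe_filter, mem_range, Set.mem_ofPred_eq] at h₁ h₂
      have hmod : n₁ % q = n₂ % q := Nat.ModEq.add_right_cancel' b <|
        (Nat.modEq_zero_iff_dvd.2 h₁.2).trans (Nat.modEq_zero_iff_dvd.2 h₂.2).symm
      rw [← Nat.div_add_mod n₁ q, ← Nat.div_add_mod n₂ q, hmod]
      exact congrArg (q * · + n₂ % q) h
  calc (#{n ∈ range x | q ∣ n + b} : ℝ) ≤ ((x / q : ℕ) : ℝ) + 1 := by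
        simpa using (Nat.cast_le (α := ℝ)).2 hcard
    _ ≤ x / q + 1 := by gcongr; exact Nat.cast_div_le

theorem card_le_of_forall_exists_sq_dvd {S : Finset ℕ} {x b D : ℕ} (hD : 0 < D)
    (hS : ∀ n ∈ S, n < x ∧ 0 < n + b ∧ ∃ m, D < m ∧ m ^ 2 ∣ n + b) :
    (#S : ℝ) ≤ (2 * x + b) / D := by
  set M := {m ∈ Ioc D (x + b) | m ^ 2 ≤ x + b}
  have hcover : S ⊆ M.biUnion fun m => {n ∈ range x | m ^ 2 ∣ n + b} := by
    intro n hn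
    obtain ⟨hnx, hpos, m, hDm, hdvd⟩ := hS n hn
    have hle : m ^ 2 ≤ x + b := (Nat.le_of_dvd hpos hdvd).trans (by omega)
    simp only [M, mem_biUnion, mem_filter, mem_Ioc, mem_range]
    exact ⟨m, ⟨⟨hDm, (Nat.le_self_pow two_ne_zero m).trans hle⟩, hle⟩, hnx, hdvd⟩
  -- each `m ∈ M` has `m² ≤ x + b`, which absorbs the `+ 1` of `card_filter_dvd_add_le`
  have hterm : ∀ m ∈ M,
      (#{n ∈ range x | m ^ 2 ∣ n + b} : ℝ) ≤ (2 * x + b) * ((m : ℝ) ^ 2)⁻¹ := by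
    intro m hm
    simp only [M, mem_filter, mem_Ioc] at hm
    have hm0 : (0 : ℝ) < (m : ℝ) ^ 2 := by
      have : (0 : ℝ) < m := by exact_mod_cast hD.trans hm.1.1
      positivity
    have hle : (m : ℝ) ^ 2 ≤ x + b := by exact_mod_cast hm.2
    calc (#{n ∈ range x | m ^ 2 ∣ n + b} : ℝ) ≤ x / (m ^ 2 : ℕ) + 1 :=
          card_filter_dvd_add_le x b _
      _ ≤ (2 * x + b) * ((m : ℝ) ^ 2)⁻¹ := by
          rw [Nat.cast_pow, ← div_eq_mul_inv, div_add_one hm0.ne', div_le_div_iff_of_pos_right hm0]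
          linarith
  have hD' : (0 : ℝ) < D := by exact_mod_cast hD
  calc (#S : ℝ) ≤ ∑ m ∈ M, (#{n ∈ range x | m ^ 2 ∣ n + b} : ℝ) := by
        exact_mod_cast (card_le_card hcover).trans card_biUnion_le
    _ ≤ ∑ m ∈ M, (2 * x + b) * ((m : ℝ) ^ 2)⁻¹ := sum_le_sum hterm
    _ = (2 * x + b) * ∑ m ∈ M, ((m : ℝ) ^ 2)⁻¹ := (mul_sum ..).symm
    _ ≤ (2 * x + b) * ∑ m ∈ Ioc D (max D (x + b)), ((m : ℝ) ^ 2)⁻¹ := by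
        gcongr
        exact (filter_subset _ _).trans (Ioc_subset_Ioc_right (le_max_right _ _))
    _ ≤ (2 * x + b) * (D : ℝ)⁻¹ := by
        gcongr
        exact (sum_Ioc_inv_sq_le_sub hD.ne' (le_max_left _ _)).trans (sub_le_self _ (by positivity))
    _ = (2 * x + b) / D := (div_eq_mul_inv ..).symm

theorem exists_lt_sq_dvd_of_not_squarefree {k D : ℕ} (hk : ¬Squarefree k) (h4 : ¬4 ∣ k)
    (h9 : ¬9 ∣ k) (hD : ∀ p ∈ sievingPrimes D, ¬p ^ 2 ∣ k) : ∃ p, D < p ∧ p ^ 2 ∣ k := by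
  rw [Nat.squarefree_iff_prime_squarefree] at hk
  push Not at hk
  obtain ⟨p, hp, hpk⟩ := hk
  rw [← sq] at hpk
  refine ⟨p, lt_of_not_ge fun hpD => ?_, hpk⟩
  by_cases h5 : 5 ≤ p
  · refine hD p ?_ hpk
    simp only [sievingPrimes, mem_filter, Nat.mem_primesBelow, Order.lt_add_one_iff, hp, h5,
      and_true]
    exact hpD
  · interval_cases p <;> norm_num at hp <;> simp_all

theorem dvd_add_iff_of_mod_eq {m n a b d : ℕ} (hn : n % m = a) (hd : d ∣ m) :
    d ∣ n + b ↔ d ∣ a + b := by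
  rw [← hn]
  exact ((Nat.mod_modEq n m).symm.add_right b).dvd_iff hd

theorem card_sieved_not_squarefree_le {a b D x : ℕ} (h4 : ¬4 ∣ a + b) (h9 : ¬9 ∣ a + b)
    (hD : 0 < D) {S : Finset ℕ} (hS : ∀ n ∈ S, n < x ∧ n % 36 = a ∧ ¬Squarefree (n + b) ∧
      ∀ p ∈ sievingPrimes D, ¬p ^ 2 ∣ n + b) :
    (#S : ℝ) ≤ (2 * x + b) / D := by
  refine card_le_of_forall_exists_sq_dvd hD fun n hn => ?_
  obtain ⟨hnx, hna, hsf, hsieve⟩ := hS n hn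
  have h4' : ¬4 ∣ n + b := by rwa [dvd_add_iff_of_mod_eq hna (by norm_num)]
  have h9' : ¬9 ∣ n + b := by rwa [dvd_add_iff_of_mod_eq hna (by norm_num)]
  refine ⟨hnx, Nat.pos_of_ne_zero fun h => h4' (h ▸ dvd_zero 4), ?_⟩
  exact exists_lt_sq_dvd_of_not_squarefree hsf h4' h9' hsieve

theorem dist_density_squarefree_sieved_le {a b₁ b₂ D x : ℕ}
    (h4₁ : ¬4 ∣ a + b₁) (h9₁ : ¬9 ∣ a + b₁) (h4₂ : ¬4 ∣ a + b₂) (h9₂ : ¬9 ∣ a + b₂)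
    (hD : 0 < D) (hx : 0 < x) :
    dist ((count (fun n => n % 36 = a ∧ Squarefree (n + b₁) ∧ Squarefree (n + b₂)) x : ℝ) / x)
      ((count (Sieved 36 a b₁ b₂ (sievingPrimes D)) x : ℝ) / x) ≤ (4 + b₁ + b₂) / D := by
  set Q := fun n => n % 36 = a ∧ Squarefree (n + b₁) ∧ Squarefree (n + b₂)
  set S := Sieved 36 a b₁ b₂ (sievingPrimes D)
  have hQS : (count Q x : ℝ) ≤ count S x := by
    refine Nat.cast_le.2 (Nat.count_mono_left fun n _ ⟨hna, hsf₁, hsf₂⟩ => ⟨hna, fun p hp => ?_⟩)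
    have hp1 : p ≠ 1 := (prime_and_coprime_of_mem_sievingPrimes hp).1.one_lt.ne'
    exact ⟨fun h => hp1 (Nat.isUnit_iff.1 (hsf₁ p (by rwa [← sq]))),
      fun h => hp1 (Nat.isUnit_iff.1 (hsf₂ p (by rwa [← sq])))⟩
  set T₁ := {n ∈ range x | S n ∧ ¬Squarefree (n + b₁)}
  set T₂ := {n ∈ range x | S n ∧ ¬Squarefree (n + b₂)}
  have hcover : {n ∈ range x | S n} ⊆ {n ∈ range x | Q n} ∪ (T₁ ∪ T₂) := by
    intro n hn
    simp only [T₁, T₂, Q, mem_union, mem_filter] at hn ⊢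
    have hna : n % 36 = a := hn.2.1
    tauto
  have hT₁ : (#T₁ : ℝ) ≤ (2 * x + b₁) / D :=
    card_sieved_not_squarefree_le h4₁ h9₁ hD fun n hn => by
      simp only [T₁, S, Sieved, mem_filter, mem_range] at hn
      exact ⟨hn.1, hn.2.1.1, hn.2.2, fun p hp => (hn.2.1.2 p hp).1⟩
  have hT₂ : (#T₂ : ℝ) ≤ (2 * x + b₂) / D :=
    card_sieved_not_squarefree_le h4₂ h9₂ hD fun n hn => by
      simp only [T₂, S, Sieved, mem_filter, mem_range] at hn
      exact ⟨hn.1, hn.2.1.1, hn.2.2, fun p hp => (hn.2.1.2 p hp).2⟩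
  have hSQ : (count S x : ℝ) ≤ count Q x + #T₁ + #T₂ := by
    have h₁ := card_le_card hcover
    have h₂ := card_union_le {n ∈ range x | Q n} (T₁ ∪ T₂)
    have h₃ := card_union_le T₁ T₂
    simp only [Nat.count_eq_card_filter_range]
    exact_mod_cast (by omega : #{n ∈ range x | S n} ≤ #{n ∈ range x | Q n} + #T₁ + #T₂)
  have hx' : (0 : ℝ) < x := by exact_mod_cast hx
  have hD' : (0 : ℝ) < D := by exact_mod_cast hD
  have hx1 : (1 : ℝ) ≤ x := by exact_mod_cast hx
  rw [Real.dist_eq, ← sub_div, abs_div, abs_of_pos hx', div_le_iff₀ hx', abs_sub_comm,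
    abs_of_nonneg (sub_nonneg.2 hQS), div_mul_eq_mul_div, le_div_iff₀ hD']
  have : ((count S x : ℝ) - count Q x) * D ≤ 4 * x + b₁ + b₂ := by
    rw [← le_div_iff₀ hD']
    calc _ ≤ (#T₁ : ℝ) + #T₂ := by linarith
      _ ≤ (2 * x + b₁) / D + (2 * x + b₂) / D := add_le_add hT₁ hT₂
      _ = _ := by ring
  nlinarith [Nat.cast_nonneg (α := ℝ) b₁, Nat.cast_nonneg (α := ℝ) b₂]

theorem tendstoUniformlyOnFilter_density_sieved {a b₁ b₂ : ℕ}
    (h4₁ : ¬4 ∣ a + b₁) (h9₁ : ¬9 ∣ a + b₁) (h4₂ : ¬4 ∣ a + b₂) (h9₂ : ¬9 ∣ a + b₂) :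
    TendstoUniformlyOnFilter
      (fun D x : ℕ => (count (Sieved 36 a b₁ b₂ (sievingPrimes D)) x : ℝ) / x)
      (fun x : ℕ =>
        (count (fun n => n % 36 = a ∧ Squarefree (n + b₁) ∧ Squarefree (n + b₂)) x : ℝ) / x)
      atTop atTop := by
  rw [Metric.tendstoUniformlyOnFilter_iff]
  intro ε hε
  have hsmall : ∀ᶠ D : ℕ in atTop, (4 + b₁ + b₂ : ℝ) / D < ε :=
    (tendsto_const_div_atTop_nhds_zero_nat _).eventually (gt_mem_nhds hε)
  filter_upwards [(hsmall.and (eventually_gt_atTop 0)).prod_mk (eventually_gt_atTop 0)]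
    with ⟨D, x⟩ ⟨⟨hDε, hD⟩, hx⟩
  exact (dist_density_squarefree_sieved_le h4₁ h9₁ h4₂ h9₂ hD hx).trans_lt hDε

/-- Density of n in a fixed class a mod 36 (avoiding divisibility of n+b₁, n+b₂ by
4 and 9) such that both n+b₁ and n+b₂ are squarefree, equals
(1/36)·∏_{p≥5, p²∣b₁−b₂}(1−1/p²)·∏_{p≥5, p²∤b₁−b₂}(1−2/p²). -/
theorem stmt_3 (b₁ b₂ : ℕ) (a : ℕ) (ha : a < 36)
    (h4₁ : ¬(4 ∣ (a + b₁))) (h9₁ : ¬(9 ∣ (a + b₁)))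
    (h4₂ : ¬(4 ∣ (a + b₂))) (h9₂ : ¬(9 ∣ (a + b₂))) :
    Tendsto
      (fun x : ℕ =>
        (((Finset.range x).filter
          (fun n => n % 36 = a ∧ Squarefree (n + b₁) ∧ Squarefree (n + b₂))).card : ℝ) / x)
      atTop
      (nhds ((1 / 36) *
        ∏' p : Nat.Primes,
          (if 5 ≤ (p : ℕ) then
            (if ((p : ℤ)) ^ 2 ∣ ((b₁ : ℤ) - b₂) then 1 - 1 / (p : ℝ) ^ 2
             else 1 - 2 / (p : ℝ) ^ 2)
           else 1))) := by
  simp only [← Nat.count_eq_card_filter_range]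
  refine (tendstoUniformlyOnFilter_density_sieved h4₁ h9₁ h4₂ h9₂).tendsto_of_eventually_tendsto
    (Eventually.of_forall fun D => ?_) ((tendsto_prod_sievingPrimes b₁ b₂).const_mul (1 / 36))
  exact_mod_cast tendsto_count_sieved_div ha b₁ b₂ fun p => prime_and_coprime_of_mem_sievingPrimes
end

section
/- For any integer d, one has ∏_{p ≥ 5, p² | d}(1 − 1/p²) · ∏_{p ≥ 5, p² ∤ d}(1 − 2/p²) ≤ (1 − 1/(p_k² − 1)) · (9/π²), where p_k is the least prime ≥ 5 with p_k² ∤ d. -/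
open Real

lemma hasProd_inv_real {ι : Type*} {f : ι → ℝ} {a : ℝ} (h : HasProd f a) (ha : a ≠ 0) :
    HasProd (fun i ↦ (f i)⁻¹) a⁻¹ := by
  have h' := h.inv₀ ha
  have heq : (fun s : Finset ι ↦ (∏ b ∈ s, f b)⁻¹) = fun s : Finset ι ↦ ∏ b ∈ s, (f b)⁻¹ := by
    funext s
    exact (Finset.prod_inv_distrib _).symm
  simpa [HasProd, heq] using h'

/-- The completely multiplicative function `n ↦ 1/n²` as a `MonoidWithZeroHom`. -/
noncomputable def invSq : ℕ →*₀ ℝ where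
  toFun := fun n ↦ 1 / (n : ℝ) ^ 2
  map_zero' := by norm_num
  map_one' := by norm_num
  map_mul' := by
    intro m n
    push_cast
    rw [mul_pow]
    rw [one_div, one_div, one_div, mul_inv]

lemma hasProd_one_sub_inv_sq :
    HasProd (fun p : Nat.Primes ↦ 1 - 1 / ((p : ℕ) : ℝ) ^ 2) (6 / π ^ 2) := by
  have hsum : Summable (fun n ↦ ‖invSq n‖) := by
    have h0 : Summable (fun n : ℕ ↦ (1 : ℝ) / (n : ℝ) ^ 2) := hasSum_zeta_two.summable
    refine h0.congr fun n ↦ ?_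
    have : (0:ℝ) ≤ 1 / (n : ℝ) ^ 2 := by positivity
    simp only [invSq, MonoidWithZeroHom.coe_mk, ZeroHom.coe_mk, Real.norm_eq_abs,
      abs_of_nonneg this]
  have h := EulerProduct.eulerProduct_completely_multiplicative_hasProd (f := invSq) hsum
  have htsum : ∑' n : ℕ, invSq n = π ^ 2 / 6 := by
    rw [show (fun n : ℕ ↦ invSq n) = fun n : ℕ ↦ (1 : ℝ) / (n : ℝ) ^ 2 from rfl]
    exact hasSum_zeta_two.tsum_eq
  rw [htsum] at h
  have hne : (π ^ 2 / 6 : ℝ) ≠ 0 := by positivity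
  have h2 := hasProd_inv_real h hne
  have heq : (π ^ 2 / 6 : ℝ)⁻¹ = 6 / π ^ 2 := by rw [inv_div]
  rw [heq] at h2
  have hfun : (fun p : Nat.Primes ↦ ((1 - invSq (p : ℕ))⁻¹)⁻¹)
      = fun p : Nat.Primes ↦ 1 - 1 / ((p : ℕ) : ℝ) ^ 2 := by
    funext p
    rw [inv_inv]
    rfl
  rwa [hfun] at h2

/-- For d ≠ 0, with p_k the least prime ≥ 5 whose square does not divide d,
∏_{p≥5, p²∣d}(1−1/p²)·∏_{p≥5, p²∤d}(1−2/p²) ≤ (1 − 1/(p_k²−1))·(9/π²). -/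
theorem stmt_4 (d : ℤ) (hd : d ≠ 0) (pk : ℕ) (hpk : pk.Prime) (hpk5 : 5 ≤ pk)
    (hpkd : ¬((pk : ℤ) ^ 2 ∣ d))
    (hleast : ∀ p : ℕ, p.Prime → 5 ≤ p → p < pk → (p : ℤ) ^ 2 ∣ d) :
    (∏' p : Nat.Primes,
      (if 5 ≤ (p : ℕ) then
        (if ((p : ℤ)) ^ 2 ∣ d then 1 - 1 / (p : ℝ) ^ 2 else 1 - 2 / (p : ℝ) ^ 2)
       else 1)) ≤ (1 - 1 / ((pk : ℝ) ^ 2 - 1)) * (9 / π ^ 2) := by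
  classical
  set c : ℝ := 1 - 1 / ((pk : ℝ) ^ 2 - 1) with hc
  set F : Nat.Primes → ℝ := fun p ↦
      (if 5 ≤ (p : ℕ) then
        (if ((p : ℤ)) ^ 2 ∣ d then 1 - 1 / (p : ℝ) ^ 2 else 1 - 2 / (p : ℝ) ^ 2)
       else 1) with hF
  have two_prime : Nat.Prime 2 := Nat.prime_two
  have three_prime : Nat.Prime 3 := Nat.prime_three
  set P2 : Nat.Primes := ⟨2, two_prime⟩ with hP2
  set P3 : Nat.Primes := ⟨3, three_prime⟩ with hP3
  set Pk : Nat.Primes := ⟨pk, hpk⟩ with hPk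
  set G : Nat.Primes → ℝ := fun p ↦
      (1 - 1 / ((p : ℕ) : ℝ) ^ 2) *
        (((if p = P2 then (4/3 : ℝ) else 1) * (if p = P3 then (9/8 : ℝ) else 1)) *
          (if p = Pk then c else 1)) with hG
  -- basic bounds
  have hpsq : ∀ p : Nat.Primes, (4 : ℝ) ≤ ((p : ℕ) : ℝ) ^ 2 := by
    intro p
    have h2 : (2 : ℝ) ≤ ((p : ℕ) : ℝ) := by exact_mod_cast p.2.two_le
    nlinarith
  have hpk_real : (5 : ℝ) ≤ (pk : ℝ) := by exact_mod_cast hpk5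
  have hpk_sq : (25 : ℝ) ≤ (pk : ℝ) ^ 2 := by nlinarith
  have hFbounds : ∀ p : Nat.Primes,
      1 - 2 / ((p : ℕ) : ℝ) ^ 2 ≤ F p ∧ F p ≤ 1 := by
    intro p
    have h4 := hpsq p
    have hx : (0 : ℝ) < ((p : ℕ) : ℝ) ^ 2 := by linarith
    have h1 : (0:ℝ) ≤ 1 / ((p : ℕ) : ℝ) ^ 2 := by positivity
    have h12 : 1 / ((p : ℕ) : ℝ) ^ 2 ≤ 2 / ((p : ℕ) : ℝ) ^ 2 := by
      gcongr
      norm_num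
    have h2 : 2 / ((p : ℕ) : ℝ) ^ 2 ≤ 1/2 := by
      rw [div_le_iff₀ hx]; linarith
    simp only [hF]
    split_ifs <;> constructor <;> push_cast <;> linarith
  have hFpos : ∀ p : Nat.Primes, 0 < F p := by
    intro p
    have h4 := hpsq p
    have hx : (0 : ℝ) < ((p : ℕ) : ℝ) ^ 2 := by linarith
    have h2 : 2 / ((p : ℕ) : ℝ) ^ 2 ≤ 1/2 := by
      rw [div_le_iff₀ hx]; linarith
    have := (hFbounds p).1
    linarith
  have hFhalf : ∀ p : Nat.Primes, 1/2 ≤ F p := by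
    intro p
    have h4 := hpsq p
    have hx : (0 : ℝ) < ((p : ℕ) : ℝ) ^ 2 := by linarith
    have h2 : 2 / ((p : ℕ) : ℝ) ^ 2 ≤ 1/2 := by
      rw [div_le_iff₀ hx]; linarith
    have := (hFbounds p).1
    linarith
  -- summability of logs
  have hlogsum : Summable fun p : Nat.Primes ↦ Real.log (F p) := by
    have hmaj : Summable (fun p : Nat.Primes ↦ 4 / ((p : ℕ) : ℝ) ^ 2) := by
      have h0 : Summable (fun n : ℕ ↦ (4 : ℝ) * (1 / (n : ℝ) ^ 2)) :=
        hasSum_zeta_two.summable.mul_left 4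
      have h1 := h0.comp_injective
        (Subtype.coe_injective : Function.Injective ((↑) : Nat.Primes → ℕ))
      refine h1.congr fun p ↦ ?_
      simp [Function.comp, div_eq_mul_inv]
    refine Summable.of_norm_bounded hmaj fun p ↦ ?_
    have h4 := hpsq p
    have hx : (0 : ℝ) < ((p : ℕ) : ℝ) ^ 2 := by linarith
    have hpos := hFpos p
    have hle1 := (hFbounds p).2
    have hlow := (hFbounds p).1
    have hhalf := hFhalf p
    have hinv2 : (F p)⁻¹ ≤ 2 := by
      rw [inv_le_comm₀ (by linarith) (by norm_num)]
      linarith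
    have hlognp : Real.log (F p) ≤ 0 := Real.log_nonpos hpos.le hle1
    have hlog2 : Real.log (F p)⁻¹ ≤ (F p)⁻¹ - 1 :=
      Real.log_le_sub_one_of_pos (by positivity)
    have hmul : F p * (F p)⁻¹ = 1 := mul_inv_cancel₀ hpos.ne'
    have hkey : (F p)⁻¹ - 1 ≤ 4 / ((p : ℕ) : ℝ) ^ 2 := by
      have h1F : 0 ≤ 1 - F p := by linarith
      have hprod : (1 - F p) * (F p)⁻¹ ≤ (2 / ((p : ℕ) : ℝ) ^ 2) * 2 := by
        apply mul_le_mul (by linarith) hinv2 (by positivity) (by positivity)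
      have heq : (F p)⁻¹ - 1 = (1 - F p) * (F p)⁻¹ := by
        field_simp
      rw [heq]
      calc (1 - F p) * (F p)⁻¹ ≤ (2 / ((p : ℕ) : ℝ) ^ 2) * 2 := hprod
        _ = 4 / ((p : ℕ) : ℝ) ^ 2 := by ring
    rw [Real.norm_eq_abs, abs_of_nonpos hlognp, ← Real.log_inv]
    linarith
  have hFmult : Multipliable F :=
    Real.multipliable_of_summable_log hFpos hlogsum
  -- HasProd for G
  have hG2 : HasProd (fun p : Nat.Primes ↦ if p = P2 then (4/3 : ℝ) else 1) (4/3) :=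
    hasProd_ite_eq P2 (4/3 : ℝ)
  have hG3 : HasProd (fun p : Nat.Primes ↦ if p = P3 then (9/8 : ℝ) else 1) (9/8) :=
    hasProd_ite_eq P3 (9/8 : ℝ)
  have hGk : HasProd (fun p : Nat.Primes ↦ if p = Pk then c else 1) c :=
    hasProd_ite_eq Pk c
  have hGprod : HasProd G ((6 / π ^ 2) * (((4/3) * (9/8)) * c)) :=
    hasProd_one_sub_inv_sq.mul ((hG2.mul hG3).mul hGk)
  -- pointwise inequality
  have hFG : ∀ p : Nat.Primes, F p ≤ G p := by
    rintro ⟨q, hq⟩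
    have hq2 : 2 ≤ q := hq.two_le
    simp only [hF, hG]
    by_cases h5 : 5 ≤ q
    · have hne2 : (⟨q, hq⟩ : Nat.Primes) ≠ P2 := by
        simp only [hP2, ne_eq, Subtype.mk.injEq]; omega
      have hne3 : (⟨q, hq⟩ : Nat.Primes) ≠ P3 := by
        simp only [hP3, ne_eq, Subtype.mk.injEq]; omega
      have hx : (4 : ℝ) ≤ (q : ℝ) ^ 2 := hpsq ⟨q, hq⟩
      rw [if_pos h5]; erw [if_neg hne2, if_neg hne3]
      by_cases hk : q = pk
      · subst hk
        erw [if_pos rfl]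
        rw [if_neg hpkd]
        have hq0 : ((q : ℝ) ^ 2 - 1) ≠ 0 := by nlinarith
        have hq0' : ((q : ℝ) ^ 2) ≠ 0 := by nlinarith
        apply le_of_eq
        simp only [one_mul, mul_one, hc]
        field_simp
        ring
      · have hnek : (⟨q, hq⟩ : Nat.Primes) ≠ Pk := by
          simp only [hPk, ne_eq, Subtype.mk.injEq]; exact hk
        erw [if_neg hnek]
        simp only [one_mul, mul_one]
        by_cases hdvd : ((q : ℤ)) ^ 2 ∣ d
        · rw [if_pos hdvd]
        · rw [if_neg hdvd]
          have : 1 / (q : ℝ) ^ 2 ≤ 2 / (q : ℝ) ^ 2 := by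
            gcongr
            norm_num
          linarith
    · rw [if_neg h5]
      push_neg at h5
      interval_cases q
      · have he2 : (⟨2, hq⟩ : Nat.Primes) = P2 := by
          simp only [hP2]
        have hne3 : (⟨2, hq⟩ : Nat.Primes) ≠ P3 := by
          simp only [hP3, ne_eq, Subtype.mk.injEq]; omega
        have hnek : (⟨2, hq⟩ : Nat.Primes) ≠ Pk := by
          simp only [hPk, ne_eq, Subtype.mk.injEq]; omega
        erw [if_pos he2, if_neg hne3, if_neg hnek]
        norm_num
      · have hne2 : (⟨3, hq⟩ : Nat.Primes) ≠ P2 := by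
          simp only [hP2, ne_eq, Subtype.mk.injEq]; omega
        have he3 : (⟨3, hq⟩ : Nat.Primes) = P3 := by
          simp only [hP3]
        have hnek : (⟨3, hq⟩ : Nat.Primes) ≠ Pk := by
          simp only [hPk, ne_eq, Subtype.mk.injEq]; omega
        erw [if_neg hne2, if_pos he3, if_neg hnek]
        norm_num
      · exact absurd hq (by norm_num)
  -- conclude
  have hval : (6 / π ^ 2) * (((4/3 : ℝ) * (9/8)) * c) = c * (9 / π ^ 2) := by ring
  rw [← hval]
  refine le_of_tendsto_of_tendsto' hFmult.hasProd hGprod fun s ↦ ?_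
  exact Finset.prod_le_prod (fun p _ ↦ (hFpos p).le) (fun p _ ↦ hFG p)
end

section
/- Fix k ≥ 2 and set q = ∏_{i=2}^{k} p_i², where p_i is the i-th prime. Let A = A₁ ∪ A₂ where A₁ = {n ∈ ℕ : 4 | n and gcd(n, q) is not squarefree} and A₂ = {n ∈ ℕ : q | n}. Then A + A contains no squarefree integer. -/
/-!
Two elements of `A₁` are both divisible by `4 = 2²`, and two elements of `A₂` by `q`, hence by
`9 = p₂²`. For `a ∈ A₁` and `b ∈ A₂`, the non-squarefree number `gcd(a, q)` divides both `a` and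
`q ∣ b`, hence divides `a + b`.
-/

theorem Nat.not_squarefree_of_mul_self_dvd {p n : ℕ} (hp : p.Prime) (h : p * p ∣ n) :
    ¬ Squarefree n :=
  fun hn => Nat.squarefree_iff_prime_squarefree.1 hn p hp h

theorem Nat.not_squarefree_add_of_not_squarefree_gcd {a b q : ℕ}
    (ha : ¬ Squarefree (Nat.gcd a q)) (hb : q ∣ b) : ¬ Squarefree (a + b) :=
  fun hab => ha (hab.squarefree_of_dvd
    (dvd_add (Nat.gcd_dvd_left a q) ((Nat.gcd_dvd_right a q).trans hb)))

theorem nine_dvd_prod_sq_nth_prime {k : ℕ} (hk : 2 ≤ k) :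
    9 ∣ ∏ i ∈ Finset.Icc 2 k, (Nat.nth Nat.Prime (i - 1)) ^ 2 := by
  have h := Finset.dvd_prod_of_mem (fun i => (Nat.nth Nat.Prime (i - 1)) ^ 2)
    (Finset.mem_Icc.mpr ⟨le_rfl, hk⟩)
  simpa [Nat.nth_prime_one_eq_three] using h

/-- With q = ∏_{i=2}^{k} p_i² (p_i the i-th prime, k ≥ 2) and
A = {n : 4 ∣ n, gcd(n,q) not squarefree} ∪ {n : q ∣ n}, the sumset A + A
contains no squarefree integer. -/
theorem stmt_6 (k : ℕ) (hk : 2 ≤ k)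
    (q : ℕ) (hq : q = ∏ i ∈ Finset.Icc 2 k, (Nat.nth Nat.Prime (i - 1)) ^ 2)
    (A : Set ℕ)
    (hA : A = {n : ℕ | 4 ∣ n ∧ ¬ Squarefree (Nat.gcd n q)} ∪ {n : ℕ | q ∣ n}) :
    ∀ a ∈ A, ∀ b ∈ A, ¬ Squarefree (a + b) := by
  have h9q : 9 ∣ q := hq ▸ nine_dvd_prod_sq_nth_prime hk
  subst hA
  rintro a (⟨h4a, hga⟩ | hqa) b (⟨h4b, hgb⟩ | hqb)
  · exact Nat.not_squarefree_of_mul_self_dvd Nat.prime_two (dvd_add h4a h4b)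
  · exact Nat.not_squarefree_add_of_not_squarefree_gcd hga hqb
  · exact add_comm a b ▸ Nat.not_squarefree_add_of_not_squarefree_gcd hgb hqa
  · exact Nat.not_squarefree_of_mul_self_dvd Nat.prime_three (h9q.trans (dvd_add hqa hqb))
end

section
/- Let q ≥ 1 be an odd integer. Then every integer n > 764 + 3q can be written as n = 36x + 100y + qz with x, y, z nonnegative integers. -/
/-!
Subtracting `q * z` for a suitable `z < 4` makes `n` divisible by `4`, because an odd `q` is a
unit modulo `4`; the remainder is then a multiple of `4` exceeding `764 = 4 * 191`, and `191` is
the Frobenius number of `9` and `25`.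
-/

namespace Nat

theorem exists_eq_mul_mul_add_mul_mul_of_dvd {a b d m : ℕ} (hab : Coprime a b) (hd : d ∣ m)
    (hm : d * (a.pred * b.pred) ≤ m) : ∃ x y : ℕ, m = d * a * x + d * b * y := by
  obtain ⟨k, rfl⟩ := hd
  rcases d.eq_zero_or_pos with rfl | hd
  · exact ⟨0, 0, by simp⟩
  obtain ⟨x, y, hxy⟩ := exists_add_mul_eq_of_gcd_dvd_of_mul_pred_le a b k
    (by simp [hab.gcd_eq_one]) (le_of_mul_le_mul_left hm hd)
  exact ⟨x, y, by rw [← hxy]; ring⟩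

theorem mul_self_modEq_one_four_of_odd {q : ℕ} (hq : Odd q) : q * q ≡ 1 [MOD 4] := by
  obtain ⟨a, rfl⟩ := hq
  have h : (2 * a + 1) * (2 * a + 1) = 1 + 4 * (a * a + a) := by ring
  rw [h]
  exact ((Nat.modEq_iff_dvd' (by omega)).mpr (by simp)).symm

theorem exists_lt_four_mul_modEq_of_odd {q : ℕ} (hq : Odd q) (n : ℕ) :
    ∃ z < 4, q * z ≡ n [MOD 4] := by
  refine ⟨q * n % 4, Nat.mod_lt _ (by norm_num), ?_⟩
  calc q * (q * n % 4) ≡ q * (q * n) [MOD 4] := (Nat.mod_modEq _ _).mul_left q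
    _ = q * q * n := (mul_assoc _ _ _).symm
    _ ≡ 1 * n [MOD 4] := (mul_self_modEq_one_four_of_odd hq).mul_right n
    _ = n := one_mul n

end Nat

theorem stmt_11_general (q : ℕ) (hq : Odd q) :
    ∀ n : ℕ, 764 + 3 * q < n → ∃ x y z : ℕ, n = 36 * x + 100 * y + q * z := by
  intro n hn
  obtain ⟨z, hz, hzn⟩ := Nat.exists_lt_four_mul_modEq_of_odd hq n
  have hqz : q * z ≤ 3 * q := by rw [mul_comm]; exact Nat.mul_le_mul_right q (by omega)
  have h4 : 4 ∣ n - q * z := (Nat.modEq_iff_dvd' (by omega)).mp hzn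
  obtain ⟨x, y, hxy⟩ := Nat.exists_eq_mul_mul_add_mul_mul_of_dvd (a := 9) (b := 25)
    (by norm_num) h4 (by norm_num; omega)
  exact ⟨x, y, z, by omega⟩

/-- For odd q ≥ 1, every n > 764 + 3q is of the form 36x + 100y + qz. -/
theorem stmt_11 (q : ℕ) (hq1 : 1 ≤ q) (hq : Odd q) :
    ∀ n : ℕ, 764 + 3 * q < n → ∃ x y z : ℕ, n = 36 * x + 100 * y + q * z :=
  stmt_11_general q hq
end

section
/- 1 − 18/π² + (24/25)·∏_{p prime, p ≥ 7}(1 − 2/p²) < 0.0473, i.e. this expression is strictly less than 1/4 − 2/π². -/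
open Real

/-!
Every factor `1 - 2/p²` lies in `(0, 1]` and `∑ 2/p²` converges, so the infinite product is
bounded above by its partial product over the primes `7 ≤ p ≤ 61`, which is `0.90714… < 0.9072`.
Moving the `π`-terms to one side, the claim becomes `3/4 + (24/25) ∏ (1 - 2/p²) < 16/π²`, and
`π < 3.1416` gives `16/π² > 1.6211 > 3/4 + (24/25) · 0.9072`.
-/

/-- Logarithms turn the product into a sum of nonpositive terms, which is bounded by any
finite partial sum. -/
theorem Real.tprod_le_prod_of_le_one {ι : Type*} {f : ι → ℝ} (hpos : ∀ i, 0 < f i)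
    (hle : ∀ i, f i ≤ 1) (hsum : Summable fun i ↦ 1 - f i) (s : Finset ι) :
    ∏' i, f i ≤ ∏ i ∈ s, f i := by
  have hlog : Summable fun i ↦ log (f i) := by
    simpa using Real.summable_log_one_add_of_summable hsum.neg
  rw [← rexp_tsum_eq_tprod hpos hlog, ← Finset.prod_congr rfl fun i _ ↦ exp_log (hpos i),
    ← exp_sum]
  gcongr
  have htail : ∑' i : ↥((s : Set ι)ᶜ), log (f i) ≤ 0 :=
    tsum_nonpos fun i ↦ log_nonpos (hpos i).le (hle i)
  linarith [hlog.sum_add_tsum_compl (s := s)]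

lemma one_sub_two_div_sq_pos {n : ℕ} (hn : 2 ≤ n) : 0 < 1 - 2 / (n : ℝ) ^ 2 := by
  have hn' : (2 : ℝ) ≤ n := by exact_mod_cast hn
  rw [sub_pos, div_lt_one (by positivity)]
  nlinarith

lemma Nat.Primes.summable_two_div_sq : Summable fun p : Nat.Primes ↦ 2 / ((p : ℕ) : ℝ) ^ 2 := by
  have h : Summable fun n : ℕ ↦ 2 / (n : ℝ) ^ 2 := by
    simpa [div_eq_mul_inv] using (summable_nat_pow_inv.mpr one_lt_two).mul_left 2
  exact h.comp_injective Nat.Primes.coe_nat_injective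

theorem tprod_primes_le_prod (q : ℕ) (s : Finset Nat.Primes) :
    ∏' p : Nat.Primes, (if q ≤ (p : ℕ) then 1 - 2 / (p : ℝ) ^ 2 else 1) ≤
      ∏ p ∈ s, (if q ≤ (p : ℕ) then 1 - 2 / (p : ℝ) ^ 2 else 1) := by
  refine Real.tprod_le_prod_of_le_one (fun p ↦ ?_) (fun p ↦ ?_) ?_ s
  · split_ifs
    exacts [one_sub_two_div_sq_pos p.2.two_le, one_pos]
  · split_ifs
    exacts [sub_le_self _ (by positivity), le_rfl]
  · refine Nat.Primes.summable_two_div_sq.of_nonneg_of_le (fun p ↦ ?_) (fun p ↦ ?_) <;>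
      split_ifs <;> simp [div_nonneg]

lemma prod_primes_Icc_seven_sixty_one_lt :
    ∏ p ∈ (Finset.Icc 7 61).filter Nat.Prime, (1 - 2 / (p : ℝ) ^ 2) < 0.9072 := by
  rw [show (Finset.Icc 7 61).filter Nat.Prime = {7, 11, 13, 17, 19, 23, 29, 31, 37, 41, 43, 47,
    53, 59, 61} by decide]
  norm_num

lemma sixteen_div_pi_sq_gt : 1.6211 < 16 / π ^ 2 := by
  rw [lt_div_iff₀ (by positivity)]
  nlinarith [pi_pos, pi_lt_d4]

/-- 1 − 18/π² + (24/25)·∏_{p prime, p ≥ 7}(1 − 2/p²) < 1/4 − 2/π². -/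
theorem stmt_18 :
    1 - 18 / π ^ 2 +
      (24 / 25) * ∏' p : Nat.Primes, (if 7 ≤ (p : ℕ) then 1 - 2 / (p : ℝ) ^ 2 else 1) <
    1 / 4 - 2 / π ^ 2 := by
  have hprod : ∏' p : Nat.Primes, (if 7 ≤ (p : ℕ) then 1 - 2 / (p : ℝ) ^ 2 else 1) < 0.9072 :=
    calc _ ≤ ∏ p ∈ (Finset.Icc 7 61).subtype Nat.Prime,
          (if 7 ≤ (p : ℕ) then 1 - 2 / (p : ℝ) ^ 2 else 1) := tprod_primes_le_prod 7 _
      _ = ∏ p ∈ (Finset.Icc 7 61).filter Nat.Prime, (1 - 2 / (p : ℝ) ^ 2) := by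
        refine (Finset.prod_subtype_eq_prod_filter
          (fun n : ℕ ↦ if 7 ≤ n then 1 - 2 / (n : ℝ) ^ 2 else 1)).trans ?_
        exact Finset.prod_congr rfl fun n hn ↦
          if_pos (Finset.mem_Icc.1 (Finset.mem_filter.1 hn).1).1
      _ < 0.9072 := prod_primes_Icc_seven_sixty_one_lt
  have hsplit : 18 / π ^ 2 = 16 / π ^ 2 + 2 / π ^ 2 := by ring
  linarith [sixteen_div_pi_sq_gt]
end
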